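/- Let K be a locally presentable category, (C, C^□) a cofibrant weak factorization system generated by a set I ⊆ C, (Cyl, γ, σ) a cartesian cylinder for (C, C^□), and S ⊆ C a subset. Then C^□ ⊆ W(Cyl,S,I); indeed, every dual strong deformation retract lies in W(Cyl,S,I). -/

import Mathlib

/-!
Common definitions: weak factorization systems, functorial cylinders,
Cisinski's construction, localizers, locally presentable categories.
-/

universe w v u u₁ u₂ u₃

open CategoryTheory Limits Opposite

namespace Paper

variable {K : Type u} [Category.{v} K]

/-- The class of maps with the right lifting property against all maps in `H`. -/
def Rlp (H : MorphismProperty K) : MorphismProperty K :=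
  fun _ _ g => ∀ ⦃A B : K⦄ (h : A ⟶ B), H h → HasLiftingProperty h g

/-- The class of maps with the left lifting property against all maps in `H`. -/
def Llp (H : MorphismProperty K) : MorphismProperty K :=
  fun _ _ f => ∀ ⦃A B : K⦄ (h : A ⟶ B), H h → HasLiftingProperty f h

/-- Weak factorization system. -/
structure IsWFS (L R : MorphismProperty K) : Prop where
  llp_eq : L = Llp R
  rlp_eq : R = Rlp L
  factor : ∀ ⦃X Y : K⦄ (f : X ⟶ Y),
    ∃ (Z : K) (l : X ⟶ Z) (r : Z ⟶ Y), L l ∧ R r ∧ l ≫ r = f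

/-- A class of maps is essentially a (small) set. -/
def IsSmallClass (I : MorphismProperty K) : Prop :=
  Small.{v} (Σ (X : K) (Y : K), { f : X ⟶ Y // I f })

/-- Every object is cofibrant. -/
def AllCofibrant [HasInitial K] (L : MorphismProperty K) : Prop :=
  ∀ X : K, L (initial.to X)

/-- `L` is cofibrantly generated (by a set). -/
def CofGenerated (L : MorphismProperty K) : Prop :=
  ∃ I : MorphismProperty K, IsSmallClass I ∧ L = Llp (Rlp I)

/-- intersection of two classes of maps -/
def interClass (A B : MorphismProperty K) : MorphismProperty K := fun _ _ f => A f ∧ B f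

/-- closed under retracts in the arrow category -/
def RetractClosed (W : MorphismProperty K) : Prop :=
  ∀ ⦃f g : Arrow K⦄ (i : f ⟶ g) (r : g ⟶ f), i ≫ r = 𝟙 f → W g.hom → W f.hom

/-- the 2-out-of-3 property -/
def TwoOutOfThree (W : MorphismProperty K) : Prop :=
  (∀ ⦃X Y Z : K⦄ (f : X ⟶ Y) (g : Y ⟶ Z), W f → W g → W (f ≫ g)) ∧
  (∀ ⦃X Y Z : K⦄ (f : X ⟶ Y) (g : Y ⟶ Z), W f → W (f ≫ g) → W g) ∧
  (∀ ⦃X Y Z : K⦄ (f : X ⟶ Y) (g : Y ⟶ Z), W g → W (f ≫ g) → W f)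

/-- Quillen model structure, given by cofibrations, weak equivalences and fibrations. -/
structure IsModelStructure (Cof W Fib : MorphismProperty K) : Prop where
  retractClosed : RetractClosed W
  twoOutOfThree : TwoOutOfThree W
  wfs₁ : IsWFS Cof (interClass W Fib)
  wfs₂ : IsWFS (interClass Cof W) Fib

/-- the functor `X ↦ X + X` -/
@[simps] noncomputable def double (K : Type u) [Category.{v} K] [HasBinaryCoproducts K] :
    K ⥤ K where
  obj X := X ⨿ X
  map f := coprod.map f f

/-- A functorial cylinder: a functor `C` together with natural transformations
`γ : X + X ⟶ C X` and `σ : C X ⟶ X` factoring the codiagonal. -/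
structure Cylinder (K : Type u) [Category.{v} K] [HasBinaryCoproducts K] where
  C : K ⥤ K
  γ : double K ⟶ C
  σ : C ⟶ 𝟭 K
  fac : ∀ X : K, γ.app X ≫ σ.app X = coprod.desc (𝟙 X) (𝟙 X)

namespace Cylinder
variable [HasBinaryCoproducts K] (cyl : Cylinder K)

/-- `γ⁰` -/
noncomputable def γ₀ : 𝟭 K ⟶ cyl.C where
  app X := coprod.inl ≫ cyl.γ.app X
  naturality X Y f := by
    have h := cyl.γ.naturality f
    dsimp [double] at h ⊢
    rw [Category.assoc, ← h, ← Category.assoc, ← Category.assoc, coprod.inl_map]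

/-- `γ¹` -/
noncomputable def γ₁ : 𝟭 K ⟶ cyl.C where
  app X := coprod.inr ≫ cyl.γ.app X
  naturality X Y f := by
    have h := cyl.γ.naturality f
    dsimp [double] at h ⊢
    rw [Category.assoc, ← h, ← Category.assoc, ← Category.assoc, coprod.inr_map]

/-- `(Cyl, γ, σ)` is a cylinder for a weak factorization system whose left class is `L`
if each `γ_X` lies in `L`. -/
def IsCylinderFor (L : MorphismProperty K) : Prop := ∀ X : K, L (cyl.γ.app X)

/-- the cylinder is final if each `σ_X` lies in `R`. -/
def IsFinal (R : MorphismProperty K) : Prop := ∀ X : K, R (cyl.σ.app X)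

end Cylinder

section Star
variable [HasPushouts K] {F F' : K ⥤ K}

/-- `f ⋆ α`: the induced map from the pushout of `F f` along `α_X` to `F' Y`. -/
noncomputable def starMap (α : F ⟶ F') {X Y : K} (f : X ⟶ Y) :
    pushout (F.map f) (α.app X) ⟶ F'.obj Y :=
  pushout.desc (α.app Y) (F'.map f) (α.naturality f)

/-- the class `L` is stable under `(−) ⋆ α`. -/
def StableUnderStar (L : MorphismProperty K) (α : F ⟶ F') : Prop :=
  ∀ ⦃X Y : K⦄ (f : X ⟶ Y), L f → L (starMap α f)

/-- the class `I ⋆ α = { f ⋆ α | f ∈ I }`. -/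
def starClass (α : F ⟶ F') (I : MorphismProperty K) : MorphismProperty K :=
  fun _ _ g => ∃ (X Y : K) (f : X ⟶ Y), I f ∧ Arrow.mk g = Arrow.mk (starMap α f)

end Star

/-- the cylinder is cartesian with respect to the left class `L`:
the cylinder functor is a left adjoint and `L` is stable under `⋆γ`, `⋆γ⁰` and `⋆γ¹`. -/
structure Cylinder.IsCartesian [HasBinaryCoproducts K] [HasPushouts K]
    (cyl : Cylinder K) (L : MorphismProperty K) : Prop where
  leftAdjoint : cyl.C.IsLeftAdjoint
  star_γ : StableUnderStar L cyl.γ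
  star_γ₀ : StableUnderStar L cyl.γ₀
  star_γ₁ : StableUnderStar L cyl.γ₁

section Lambda
variable [HasBinaryCoproducts K] [HasPushouts K]

/-- `Λⁿ(Cyl,S,I)` -/
noncomputable def LambdaN (cyl : Cylinder K) (S I : MorphismProperty K) :
    ℕ → MorphismProperty K
  | 0 => fun _ _ f => S f ∨ starClass cyl.γ₀ I f ∨ starClass cyl.γ₁ I f
  | n + 1 => starClass cyl.γ (LambdaN cyl S I n)

/-- `Λ(Cyl,S,I)` -/
noncomputable def Lambda (cyl : Cylinder K) (S I : MorphismProperty K) :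
    MorphismProperty K :=
  fun _ _ f => ∃ n : ℕ, LambdaN cyl S I n f

/-- `T` is fibrant if `T → 1` has the right lifting property against `Λ(Cyl,S,I)`. -/
noncomputable def Fibrant [HasTerminal K] (cyl : Cylinder K) (S I : MorphismProperty K)
    (T : K) : Prop :=
  Rlp (Lambda cyl S I) (terminal.from T)

end Lambda

/-- `f` and `g` are homotopic: `(f|g)` factors through `γ_X`. -/
def Htp [HasBinaryCoproducts K] (cyl : Cylinder K) {X Y : K} (f g : X ⟶ Y) : Prop :=
  ∃ h : cyl.C.obj X ⟶ Y, cyl.γ.app X ≫ h = coprod.desc f g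

/-- symmetric-transitive closure of a relation -/
inductive STClos {α : Sort*} (r : α → α → Prop) : α → α → Prop
  | base : ∀ {x y : α}, r x y → STClos r x y
  | symm : ∀ {x y : α}, STClos r x y → STClos r y x
  | trans : ∀ {x y z : α}, STClos r x y → STClos r y z → STClos r x z

/-- the homotopy equivalence relation `∼`, the symmetric-transitive closure of `≃`. -/
def HtpEq [HasBinaryCoproducts K] (cyl : Cylinder K) {X Y : K} : (X ⟶ Y) → (X ⟶ Y) → Prop :=
  STClos (Htp cyl)

/-- `W(Cyl,S,I)`: the maps `f : X ⟶ Y` such that for every fibrant `T` the induced map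
`Hom(Y,T)/∼ → Hom(X,T)/∼` is bijective (expressed elementwise). -/
noncomputable def Weq [HasBinaryCoproducts K] [HasPushouts K] [HasTerminal K]
    (cyl : Cylinder K) (S I : MorphismProperty K) : MorphismProperty K :=
  fun X Y f => ∀ T : K, Fibrant cyl S I T →
    (∀ t : X ⟶ T, ∃ u : Y ⟶ T, HtpEq cyl (f ≫ u) t) ∧
    (∀ u v : Y ⟶ T, HtpEq cyl (f ≫ u) (f ≫ v) → HtpEq cyl u v)

/-- pushout stability of a class of maps -/
def StableUnderPushout (L : MorphismProperty K) : Prop :=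
  ∀ ⦃A B A' B' : K⦄ ⦃f : A ⟶ B⦄ ⦃g : A ⟶ A'⦄ ⦃f' : A' ⟶ B'⦄ ⦃g' : B ⟶ B'⦄,
    IsPushout g f f' g' → L f → L f'

/-- closure under transfinite composition of smooth (colimit preserving) chains -/
def ClosedUnderTransfiniteComposition (L : MorphismProperty K) : Prop :=
  ∀ (o : Ordinal.{v}) (ho : (0 : Ordinal.{v}) < o)
    (D : (Set.Iio o : Set Ordinal.{v}) ⥤ K),
    Nonempty (PreservesColimits D) →
    (∀ (β : Ordinal.{v}) (hβ : β + 1 < o),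
      L (D.map (homOfLE (Subtype.mk_le_mk.mpr ((le_self_add : β ≤ β + 1))) :
        (⟨β, lt_of_le_of_lt ((le_self_add : β ≤ β + 1)) hβ⟩ : (Set.Iio o : Set Ordinal.{v})) ⟶
        ⟨β + 1, hβ⟩))) →
    ∀ (c : Cocone D), IsColimit c → L (c.ι.app ⟨0, ho⟩)

/-- A localizer for the class `Cof`: a class `W` with the 2-out-of-3 property, containing
`Cof^□`, and whose intersection with `Cof` is closed under pushouts and transfinite
compositions. -/
structure IsLocalizer (Cof W : MorphismProperty K) : Prop where
  twoOutOfThree : TwoOutOfThree W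
  rlp_le : ∀ ⦃X Y : K⦄ (f : X ⟶ Y), Rlp Cof f → W f
  pushout : StableUnderPushout (interClass Cof W)
  transfinite : ClosedUnderTransfiniteComposition (interClass Cof W)

/-- `W(S)`: the smallest localizer for `Cof` containing `S` (the intersection of all of them). -/
def smallestLocalizer (Cof S : MorphismProperty K) : MorphismProperty K :=
  fun _ _ f => ∀ W : MorphismProperty K, IsLocalizer Cof W →
    (∀ ⦃A B : K⦄ (s : A ⟶ B), S s → W s) → W f

/-- the smallest class containing `S` which is a localizer for `Cof` and moreover closed
under retracts in the arrow category. -/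
def smallestRetractLocalizer (Cof S : MorphismProperty K) : MorphismProperty K :=
  fun _ _ f => ∀ W : MorphismProperty K, IsLocalizer Cof W → RetractClosed W →
    (∀ ⦃A B : K⦄ (s : A ⟶ B), S s → W s) → W f

/-- the empty class of maps -/
def emptyClass (K : Type u) [Category.{v} K] : MorphismProperty K := fun _ _ _ => False

/-- a preorder is `κ`-directed if every subset of cardinality `< κ` has an upper bound -/
def IsCardinalDirected (κ : Cardinal.{v}) (J : Type v) [Preorder J] : Prop :=
  ∀ S : Set J, Cardinal.mk S < κ → ∃ j : J, ∀ s ∈ S, s ≤ j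

/-- an object `X` is `κ`-presentable if `Hom(X,-)` preserves `κ`-directed colimits -/
def IsPresentableObj (κ : Cardinal.{v}) (X : K) : Prop :=
  ∀ (J : Type v) [Preorder J], IsCardinalDirected κ J →
    Nonempty (PreservesColimitsOfShape J (coyoneda.obj (op X)))

/-- `X` is a `κ`-directed colimit of objects from the set `A` -/
def IsDirectedColimitFrom (κ : Cardinal.{v}) (A : Set K) (X : K) : Prop :=
  ∃ (J : Type v) (pre : Preorder J),
    letI := pre
    IsCardinalDirected κ J ∧
      ∃ (D : J ⥤ K) (c : Cocone D), Nonempty (IsColimit c) ∧ c.pt = X ∧ ∀ j : J, D.obj j ∈ A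

/-- `κ`-accessible category -/
structure IsCardinalAccessible (κ : Cardinal.{v}) (K : Type u) [Category.{v} K] : Prop where
  isRegular : κ.IsRegular
  hasDirectedColimits :
    ∀ (J : Type v) [Preorder J], IsCardinalDirected κ J → HasColimitsOfShape J K
  generators : ∃ A : Set K, Small.{v} A ∧ (∀ X ∈ A, IsPresentableObj κ X) ∧
    ∀ X : K, IsDirectedColimitFrom κ A X

/-- accessible category -/
def IsAccessibleCat (K : Type u) [Category.{v} K] : Prop :=
  ∃ κ : Cardinal.{v}, IsCardinalAccessible κ K

/-- locally presentable category: accessible and cocomplete -/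
def IsLocallyPresentable (K : Type u) [Category.{v} K] : Prop :=
  IsAccessibleCat K ∧ HasColimits K

/-- `F` preserves `κ`-directed colimits -/
def PreservesCardinalDirectedColimits (κ : Cardinal.{v}) {A : Type u₁} [Category.{v} A]
    {C : Type u₂} [Category.{v} C] (F : A ⥤ C) : Prop :=
  ∀ (J : Type v) [Preorder J], IsCardinalDirected κ J →
    Nonempty (PreservesColimitsOfShape J F)

/-- accessible functor -/
def IsAccessibleFunctor {A : Type u₁} [Category.{v} A] {C : Type u₂} [Category.{v} C]
    (F : A ⥤ C) : Prop :=
  ∃ κ : Cardinal.{v}, IsCardinalAccessible κ A ∧ IsCardinalAccessible κ C ∧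
    PreservesCardinalDirectedColimits κ F

/-- dual strong deformation retract -/
def DualStrongDeformationRetract [HasBinaryCoproducts K] (cyl : Cylinder K)
    {X Y : K} (f : X ⟶ Y) : Prop :=
  ∃ (g : Y ⟶ X) (h : cyl.C.obj X ⟶ X),
    g ≫ f = 𝟙 Y ∧ cyl.γ₀.app X ≫ h = 𝟙 X ∧ cyl.γ₁.app X ≫ h = f ≫ g ∧
      h ≫ f = cyl.σ.app X ≫ f


/-! A trivial fibration `f : X ⟶ Y` between cofibrant objects has a section `g`, lifted against
`0 ⟶ Y`, and a homotopy from `𝟙 X` to `f ≫ g` over `Y`, lifted against `γ_X`; so it is a dual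
strong deformation retract. Such a map induces a bijection on homotopy classes into any object:
`g` gives an inverse, since `f ≫ g ∼ 𝟙` and `g ≫ f = 𝟙`. -/

section Homotopy

variable [HasBinaryCoproducts K]

lemma Cylinder.γ_app_comp_eq_desc_iff (cyl : Cylinder K) {X Y : K} (h : cyl.C.obj X ⟶ Y)
    (a b : X ⟶ Y) :
    cyl.γ.app X ≫ h = coprod.desc a b ↔ cyl.γ₀.app X ≫ h = a ∧ cyl.γ₁.app X ≫ h = b := by
  refine ⟨fun hh => ⟨?_, ?_⟩, fun ⟨h₀, h₁⟩ => coprod.hom_ext ?_ ?_⟩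
  · exact (Category.assoc _ _ _).trans ((coprod.inl ≫= hh).trans (coprod.inl_desc a b))
  · exact (Category.assoc _ _ _).trans ((coprod.inr ≫= hh).trans (coprod.inr_desc a b))
  · exact (Category.assoc _ _ _).symm.trans (h₀.trans (coprod.inl_desc a b).symm)
  · exact (Category.assoc _ _ _).symm.trans (h₁.trans (coprod.inr_desc a b).symm)

variable {cyl : Cylinder K}

lemma htp_iff {X Y : K} {a b : X ⟶ Y} :
    Htp cyl a b ↔ ∃ h : cyl.C.obj X ⟶ Y, cyl.γ₀.app X ≫ h = a ∧ cyl.γ₁.app X ≫ h = b :=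
  exists_congr fun h => cyl.γ_app_comp_eq_desc_iff h a b

lemma Htp.precomp {Z X Y : K} (w : Z ⟶ X) {a b : X ⟶ Y} (hab : Htp cyl a b) :
    Htp cyl (w ≫ a) (w ≫ b) := by
  obtain ⟨h, h₀, h₁⟩ := htp_iff.1 hab
  refine htp_iff.2 ⟨cyl.C.map w ≫ h, ?_, ?_⟩
  · rw [← Category.assoc, ← cyl.γ₀.naturality w]
    simp [h₀]
  · rw [← Category.assoc, ← cyl.γ₁.naturality w]
    simp [h₁]

lemma Htp.postcomp {X Y T : K} {a b : X ⟶ Y} (hab : Htp cyl a b) (t : Y ⟶ T) :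
    Htp cyl (a ≫ t) (b ≫ t) := by
  obtain ⟨h, h₀, h₁⟩ := htp_iff.1 hab
  exact htp_iff.2 ⟨h ≫ t, by rw [← h₀, Category.assoc], by rw [← h₁, Category.assoc]⟩

lemma HtpEq.precomp {Z X Y : K} (w : Z ⟶ X) {a b : X ⟶ Y} (hab : HtpEq cyl a b) :
    HtpEq cyl (w ≫ a) (w ≫ b) := by
  induction hab with
  | base h => exact .base (h.precomp w)
  | symm _ ih => exact .symm ih
  | trans _ _ ih₁ ih₂ => exact .trans ih₁ ih₂

end Homotopy

lemma DualStrongDeformationRetract.weq [HasBinaryCoproducts K] [HasPushouts K] [HasTerminal K]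
    {cyl : Cylinder K} (S I : MorphismProperty K) {X Y : K} {f : X ⟶ Y}
    (hf : DualStrongDeformationRetract cyl f) : Weq cyl S I f := by
  obtain ⟨g, h, hgf, h₀, h₁, -⟩ := hf
  have hid : Htp cyl (𝟙 X) (f ≫ g) := htp_iff.2 ⟨h, h₀, h₁⟩
  refine fun T _ => ⟨fun t => ⟨g ≫ t, .symm (.base ?_)⟩, fun u v huv => ?_⟩
  · simpa using hid.postcomp t
  · simpa [← Category.assoc, hgf] using huv.precomp g

lemma DualStrongDeformationRetract.of_hasLiftingProperty [HasInitial K] [HasBinaryCoproducts K]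
    (cyl : Cylinder K) {X Y : K} (f : X ⟶ Y) [HasLiftingProperty (initial.to Y) f]
    [HasLiftingProperty (cyl.γ.app X) f] : DualStrongDeformationRetract cyl f := by
  have section_sq : CommSq (initial.to X) (initial.to Y) f (𝟙 Y) := ⟨Subsingleton.elim _ _⟩
  obtain ⟨g, hgf⟩ : ∃ g : Y ⟶ X, g ≫ f = 𝟙 Y := ⟨section_sq.lift, section_sq.fac_right⟩
  -- `W` is pinned so that `cyl.γ.app X` and `cyl.fac` are read at the same object `(double K).obj X`.
  have homotopy_sq : CommSq (W := (double K).obj X)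
      (coprod.desc (𝟙 X) (f ≫ g)) (cyl.γ.app X) f (cyl.σ.app X ≫ f) := ⟨by
    rw [← Category.assoc, cyl.fac]
    change coprod.desc (𝟙 X) (f ≫ g) ≫ f = coprod.desc (𝟙 X) (𝟙 X) ≫ f
    ext <;> simp [hgf]⟩
  have := HasLiftingProperty.sq_hasLift homotopy_sq
  obtain ⟨h₀, h₁⟩ := (cyl.γ_app_comp_eq_desc_iff _ _ _).1 homotopy_sq.fac_left
  exact ⟨g, homotopy_sq.lift, hgf, h₀, h₁, homotopy_sq.fac_right⟩

theorem statement14_general {K : Type u} [Category.{v} K]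
    [HasInitial K] [HasTerminal K] [HasBinaryCoproducts K] [HasPushouts K]
    (Cof : MorphismProperty K)
    (I : MorphismProperty K)
    (hcof : AllCofibrant Cof)
    (cyl : Cylinder K) (hcyl : cyl.IsCylinderFor Cof)
    (S : MorphismProperty K) :
    (∀ ⦃X Y : K⦄ (f : X ⟶ Y),
      DualStrongDeformationRetract cyl f → Weq cyl S I f) ∧
    (∀ ⦃X Y : K⦄ (f : X ⟶ Y), Rlp Cof f → Weq cyl S I f) := by
  refine ⟨fun _ _ _ hf => hf.weq S I, fun X Y f hf => ?_⟩
  have : HasLiftingProperty (initial.to Y) f := hf _ (hcof Y)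
  have : HasLiftingProperty (cyl.γ.app X) f := hf _ (hcyl X)
  exact (DualStrongDeformationRetract.of_hasLiftingProperty cyl f).weq S I

/-- Corollary: trivial fibrations are weak equivalences:
`C^□ ⊆ W(Cyl,S,I)`; indeed every dual strong deformation retract lies in `W(Cyl,S,I)`. -/
theorem statement14 {K : Type u} [Category.{v} K]
    [HasInitial K] [HasTerminal K] [HasBinaryCoproducts K] [HasPushouts K]
    (hK : IsLocallyPresentable K)
    (Cof : MorphismProperty K) (hwfs : IsWFS Cof (Rlp Cof))
    (I : MorphismProperty K) (hIset : IsSmallClass I)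
    (hIL : ∀ ⦃X Y : K⦄ (f : X ⟶ Y), I f → Cof f) (hgen : Cof = Llp (Rlp I))
    (hcof : AllCofibrant Cof)
    (cyl : Cylinder K) (hcyl : cyl.IsCylinderFor Cof) (hcart : cyl.IsCartesian Cof)
    (S : MorphismProperty K) (hS : ∀ ⦃X Y : K⦄ (f : X ⟶ Y), S f → Cof f) :
    (∀ ⦃X Y : K⦄ (f : X ⟶ Y),
      DualStrongDeformationRetract cyl f → Weq cyl S I f) ∧
    (∀ ⦃X Y : K⦄ (f : X ⟶ Y), Rlp Cof f → Weq cyl S I f) :=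
  statement14_general Cof I hcof cyl hcyl S

end Paper
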